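/- arXiv:2301.11713 — 3 statements merged into one kernel-verified Lean document; each statement's English description precedes it below -/
import Mathlib

section
/- For the cycle C_n on n vertices with n even, DL(C_n) = (n−2)/2. -/
/-!
On `C_{2m}` the distance between `u` and `v` is `min ((v - u) mod 2m, (u - v) mod 2m) ≤ m`, with
equality only for antipodal vertices. A labelling with all consecutive distances `≥ m` would thus
send labels `1` and `3` to the same antipode of the vertex labelled `2`, so `DL(C_{2m}) < m`.
Conversely, labelling the vertices `t` and `m + t` by `2t + 1` and `2t + 2` puts consecutive
labels at distance `m` or `m - 1`.
-/

/-- `G` admits a `k`-dispersed labelling. -/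
def HasDispersedLabelling {V : Type*} [Fintype V] (G : SimpleGraph V) (k : ℕ) : Prop :=
  ∃ φ : Fin (Fintype.card V) ≃ V,
    ∀ i j : Fin (Fintype.card V), (j : ℕ) = (i : ℕ) + 1 → k ≤ G.dist (φ i) (φ j)

/-- `DL G`: the maximum `k` such that `G` admits a `k`-dispersed labelling. -/
noncomputable def DL {V : Type*} [Fintype V] (G : SimpleGraph V) : ℕ :=
  sSup {k | HasDispersedLabelling G k}

open SimpleGraph

lemma Fin.val_sub_eq_ite {n : ℕ} (a b : Fin n) :
    (a - b).val = if b.val ≤ a.val then a.val - b.val else n + a.val - b.val := by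
  split_ifs with h
  · exact Fin.coe_sub_iff_le.2 h
  · exact Fin.coe_sub_iff_lt.2 (not_le.1 h)

namespace SimpleGraph

variable {V : Type*} {G : SimpleGraph V}

lemma Walk.le_add_length_of_adj {f : V → ℕ} (hf : ∀ x y, G.Adj x y → f x ≤ f y + 1)
    {u v : V} (p : G.Walk u v) : f u ≤ f v + p.length := by
  induction p with
  | nil => simp
  | cons h _ ih => rw [Walk.length_cons]; linarith [hf _ _ h]

lemma Connected.le_add_dist_of_adj (hG : G.Connected) {f : V → ℕ}
    (hf : ∀ x y, G.Adj x y → f x ≤ f y + 1) (u v : V) : f u ≤ f v + G.dist u v := by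
  obtain ⟨p, hp⟩ := hG.exists_walk_length_eq_dist u v
  exact hp ▸ p.le_add_length_of_adj hf

lemma cycleGraph_dist_le_val_sub {n : ℕ} (u v : Fin (n + 2)) :
    (cycleGraph (n + 2)).dist u v ≤ (v - u).val := by
  induction h : (v - u).val generalizing v with
  | zero => simp [sub_eq_zero.1 (Fin.ext h)]
  | succ k ih =>
    have hadj : (cycleGraph (n + 2)).Adj (v - 1) v := cycleGraph_adj.2 (Or.inr (sub_sub_cancel v 1))
    calc (cycleGraph (n + 2)).dist u v
        ≤ (cycleGraph (n + 2)).dist u (v - 1) + (cycleGraph (n + 2)).dist (v - 1) v :=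
          cycleGraph_connected.dist_triangle
      _ ≤ k + 1 := by
          gcongr
          · exact ih _ (by rw [sub_right_comm, Fin.coe_sub_one]; split_ifs <;> simp_all)
          · exact (dist_eq_one_iff_adj.2 hadj).le

lemma cycleGraph_dist {n : ℕ} (u v : Fin n) :
    (cycleGraph n).dist u v = min (v - u).val (u - v).val := by
  rcases n with _ | _ | n
  · exact u.elim0
  · simp [Subsingleton.elim (α := Fin 1) u v]
  refine le_antisymm (le_min (cycleGraph_dist_le_val_sub u v) ?_) ?_
  · exact dist_comm.le.trans (cycleGraph_dist_le_val_sub v u)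
  · have hf : ∀ x y, (cycleGraph (n + 2)).Adj x y →
        min (v - x).val (x - v).val ≤ min (v - y).val (y - v).val + 1 := by
      intro x y hxy
      rw [cycleGraph_adj'] at hxy
      have := Fin.val_sub_eq_ite v x
      have := Fin.val_sub_eq_ite x v
      have := Fin.val_sub_eq_ite v y
      have := Fin.val_sub_eq_ite y v
      have := Fin.val_sub_eq_ite x y
      have := Fin.val_sub_eq_ite y x
      split_ifs at * <;> omega
    simpa using cycleGraph_connected.le_add_dist_of_adj hf u v

lemma val_sub_eq_of_le_cycleGraph_dist {m : ℕ} {u v : Fin (m + m)}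
    (h : m ≤ (cycleGraph (m + m)).dist u v) : (v - u).val = m := by
  rw [cycleGraph_dist] at h
  have := Fin.val_sub_eq_ite v u
  have := Fin.val_sub_eq_ite u v
  split_ifs at * <;> omega

end SimpleGraph

lemma hasDispersedLabelling_of_injective {n : ℕ} {G : SimpleGraph (Fin n)} {k : ℕ}
    {f : Fin n → Fin n} (hf : Function.Injective f)
    (hk : ∀ i j : Fin n, (j : ℕ) = i + 1 → k ≤ G.dist (f i) (f j)) :
    HasDispersedLabelling G k :=
  ⟨(finCongr (Fintype.card_fin n)).trans (Equiv.ofBijective f hf.bijective_of_finite),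
    fun _ _ hij => hk _ _ hij⟩

lemma HasDispersedLabelling.lt_of_cycleGraph_add_self {m k : ℕ} (hm : 2 ≤ m)
    (h : HasDispersedLabelling (cycleGraph (m + m)) k) : k < m := by
  obtain ⟨φ, hφ⟩ := h
  by_contra! hmk
  have hc : 2 < Fintype.card (Fin (m + m)) := by rw [Fintype.card_fin]; omega
  have h01 :=
    val_sub_eq_of_le_cycleGraph_dist (hmk.trans (hφ ⟨0, by omega⟩ ⟨1, by omega⟩ rfl))
  have h12 :=
    val_sub_eq_of_le_cycleGraph_dist (hmk.trans (hφ ⟨1, by omega⟩ ⟨2, by omega⟩ rfl))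
  have h02 : φ ⟨2, hc⟩ = φ ⟨0, by omega⟩ := by
    have := Fin.val_sub_eq_ite (φ ⟨1, by omega⟩) (φ ⟨0, by omega⟩)
    have := Fin.val_sub_eq_ite (φ ⟨2, hc⟩) (φ ⟨1, by omega⟩)
    ext
    split_ifs at * <;> omega
  simpa using φ.injective h02

def cycleZigzag (m : ℕ) (i : Fin (m + m)) : Fin (m + m) :=
  ⟨if i.val % 2 = 0 then i / 2 else m + i / 2, by split_ifs <;> omega⟩

lemma cycleZigzag_injective (m : ℕ) : Function.Injective (cycleZigzag m) := by
  intro i j hij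
  rw [Fin.ext_iff] at hij ⊢
  simp only [cycleZigzag] at hij
  split_ifs at hij <;> omega

lemma hasDispersedLabelling_cycleGraph_add_self (m : ℕ) :
    HasDispersedLabelling (cycleGraph (m + m)) (m - 1) := by
  refine hasDispersedLabelling_of_injective (cycleZigzag_injective m) fun i j hij => ?_
  rw [cycleGraph_dist]
  have hi : (cycleZigzag m i).val = if i.val % 2 = 0 then i.val / 2 else m + i.val / 2 := rfl
  have hj : (cycleZigzag m j).val = if j.val % 2 = 0 then j.val / 2 else m + j.val / 2 := rfl
  have := Fin.val_sub_eq_ite (cycleZigzag m j) (cycleZigzag m i)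
  have := Fin.val_sub_eq_ite (cycleZigzag m i) (cycleZigzag m j)
  split_ifs at * <;> omega

theorem DL_cycleGraph_even (n : ℕ) (hn : 4 ≤ n) (heven : Even n) :
    DL (SimpleGraph.cycleGraph n) = (n - 2) / 2 := by
  obtain ⟨m, rfl⟩ := heven
  have hgreatest : IsGreatest {k | HasDispersedLabelling (cycleGraph (m + m)) k} (m - 1) :=
    ⟨hasDispersedLabelling_cycleGraph_add_self m,
      fun _ hk => Nat.le_sub_one_of_lt (hk.lt_of_cycleGraph_add_self (by omega))⟩
  rw [DL, hgreatest.csSup_eq]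
  omega
end

section
/- For the path P_m with m edges and m+1 vertices, DL(P_m) = m/2 if m is even and (m+1)/2 if m is odd; equivalently DL(P_m) = r(P_m). -/
/-- The eccentricity of a vertex: the maximum distance to another vertex. -/
noncomputable def eccent {V : Type*} [Fintype V] (G : SimpleGraph V) (v : V) : ℕ :=
  Finset.univ.sup (fun u => G.dist v u)

/-- The radius of a graph: the minimum eccentricity of a vertex. -/
noncomputable def graphRadius {V : Type*} [Fintype V] (G : SimpleGraph V) : ℕ :=
  sInf (Set.range (eccent G))

open SimpleGraph (pathGraph pathGraph_adj)

section

variable {V : Type*} [Fintype V] {G : SimpleGraph V} {k : ℕ}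

theorem dist_le_eccent (G : SimpleGraph V) (v u : V) : G.dist v u ≤ eccent G v :=
  Finset.le_sup (Finset.mem_univ u)

theorem hasDispersedLabelling_zero (G : SimpleGraph V) : HasDispersedLabelling G 0 :=
  ⟨(Fintype.equivFin V).symm, fun _ _ _ => Nat.zero_le _⟩

theorem hasDispersedLabelling_of_equiv {n : ℕ} (e : Fin n ≃ V)
    (he : ∀ i j : Fin n, (j : ℕ) = i + 1 → k ≤ G.dist (e i) (e j)) :
    HasDispersedLabelling G k := by
  have hn : Fintype.card V = n := by simpa using Fintype.card_congr e.symm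
  exact ⟨(finCongr hn).trans e, fun i j hij => he _ _ hij⟩

theorem HasDispersedLabelling.le_eccent (h : HasDispersedLabelling G k)
    (hV : 2 ≤ Fintype.card V) (v : V) : k ≤ eccent G v := by
  obtain ⟨φ, hφ⟩ := h
  obtain ⟨i, rfl⟩ := φ.surjective v
  suffices ∃ u, k ≤ G.dist (φ i) u from
    this.elim fun u hu => hu.trans (dist_le_eccent G _ u)
  by_cases hi : (i : ℕ) + 1 < Fintype.card V
  · exact ⟨φ ⟨i + 1, hi⟩, hφ _ _ rfl⟩
  · refine ⟨φ ⟨i - 1, by omega⟩, ?_⟩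
    rw [G.dist_comm]
    exact hφ _ _ (by simp only; omega)

theorem HasDispersedLabelling.le_graphRadius (h : HasDispersedLabelling G k)
    (hV : 2 ≤ Fintype.card V) : k ≤ graphRadius G :=
  have : Nonempty V := Fintype.card_pos_iff.mp (by omega)
  le_csInf (Set.range_nonempty _) (Set.forall_mem_range.mpr (h.le_eccent hV))

theorem HasDispersedLabelling.le_DL (h : HasDispersedLabelling G k)
    (hV : 2 ≤ Fintype.card V) : k ≤ DL G :=
  le_csSup ⟨graphRadius G, fun _ hk => HasDispersedLabelling.le_graphRadius hk hV⟩ h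

theorem DL_le_graphRadius (G : SimpleGraph V) (hV : 2 ≤ Fintype.card V) : DL G ≤ graphRadius G :=
  csSup_le ⟨0, hasDispersedLabelling_zero G⟩ fun _ hk =>
    HasDispersedLabelling.le_graphRadius hk hV

end

theorem pathGraph_natDist_le_length {n : ℕ} {u v : Fin n} (p : (pathGraph n).Walk u v) :
    Nat.dist u v ≤ p.length := by
  induction p with
  | nil => simp
  | @cons a b c hadj p ih =>
    have hab : Nat.dist a b = 1 := by
      rw [pathGraph_adj] at hadj
      simp only [Nat.dist]
      omega
    have := Nat.dist.triangle_inequality a b c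
    rw [SimpleGraph.Walk.length_cons]
    omega

theorem pathGraph_exists_walk_length {n : ℕ} (u v : Fin n) (huv : u ≤ v) :
    ∃ p : (pathGraph n).Walk u v, p.length = v - u := by
  obtain ⟨d, hd⟩ : ∃ d, (v : ℕ) = u + d := ⟨v - u, by omega⟩
  induction d generalizing u with
  | zero =>
    obtain rfl : u = v := Fin.ext (by omega)
    exact ⟨.nil, by simp⟩
  | succ d ih =>
    let w : Fin n := ⟨u + 1, by omega⟩
    obtain ⟨p, hp⟩ := ih w (Fin.mk_le_of_le_val (by omega)) (show (v : ℕ) = u + 1 + d by omega)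
    refine ⟨.cons (pathGraph_adj.mpr (.inl rfl)) p, ?_⟩
    rw [SimpleGraph.Walk.length_cons, hp]
    simp only [w]
    omega

theorem pathGraph_dist {n : ℕ} (u v : Fin n) : (pathGraph n).dist u v = Nat.dist u v := by
  refine le_antisymm ?_ ?_
  · wlog huv : u ≤ v generalizing u v
    · rw [SimpleGraph.dist_comm, Nat.dist_comm]
      exact this v u (le_of_not_ge huv)
    obtain ⟨p, hp⟩ := pathGraph_exists_walk_length u v huv
    calc (pathGraph n).dist u v ≤ p.length := SimpleGraph.dist_le p
      _ = Nat.dist u v := by simp only [hp, Nat.dist]; omega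
  · obtain ⟨p, hp⟩ := (SimpleGraph.pathGraph_preconnected n u v).exists_walk_length_eq_dist
    exact hp ▸ pathGraph_natDist_le_length p

theorem pathGraph_eccent (m : ℕ) (v : Fin (m + 1)) :
    eccent (pathGraph (m + 1)) v = max (v : ℕ) (m - v) := by
  refine le_antisymm (Finset.sup_le fun u _ => ?_) (max_le ?_ ?_)
  · rw [pathGraph_dist, Nat.dist]
    omega
  · have h := dist_le_eccent (pathGraph (m + 1)) v 0
    rw [pathGraph_dist, Nat.dist, Fin.val_zero] at h
    omega
  · have h := dist_le_eccent (pathGraph (m + 1)) v (Fin.last m)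
    rw [pathGraph_dist, Nat.dist, Fin.val_last] at h
    omega

theorem pathGraph_graphRadius (m : ℕ) : graphRadius (pathGraph (m + 1)) = (m + 1) / 2 := by
  refine le_antisymm (Nat.sInf_le ⟨⟨(m + 1) / 2, by omega⟩, ?_⟩) ?_
  · rw [pathGraph_eccent]
    dsimp only
    omega
  · refine le_csInf (Set.range_nonempty _) (Set.forall_mem_range.mpr fun v => ?_)
    rw [pathGraph_eccent]
    omega

def pathZigzag (m : ℕ) (i : Fin (m + 1)) : Fin (m + 1) :=
  if i.val % 2 = 0 then ⟨m / 2 - i / 2, by omega⟩ else ⟨m - i / 2, by omega⟩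

theorem pathZigzag_injective (m : ℕ) : Function.Injective (pathZigzag m) := by
  intro i j h
  simp only [pathZigzag] at h
  split_ifs at h <;> (simp only [Fin.mk.injEq] at h; omega)

theorem pathGraph_hasDispersedLabelling (m : ℕ) :
    HasDispersedLabelling (pathGraph (m + 1)) ((m + 1) / 2) := by
  refine hasDispersedLabelling_of_equiv
    (Equiv.ofBijective _ (pathZigzag_injective m).bijective_of_finite) fun i j hij => ?_
  simp only [Equiv.ofBijective_apply, pathGraph_dist, pathZigzag]
  split_ifs <;> simp only [Nat.dist] <;> omega

theorem DL_pathGraph (m : ℕ) (hm : 1 ≤ m) :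
    DL (SimpleGraph.pathGraph (m + 1)) = (if Even m then m / 2 else (m + 1) / 2) ∧
      DL (SimpleGraph.pathGraph (m + 1)) = graphRadius (SimpleGraph.pathGraph (m + 1)) := by
  have hV : 2 ≤ Fintype.card (Fin (m + 1)) := by simp only [Fintype.card_fin]; omega
  have hDL : DL (pathGraph (m + 1)) = (m + 1) / 2 :=
    le_antisymm (pathGraph_graphRadius m ▸ DL_le_graphRadius _ hV)
      ((pathGraph_hasDispersedLabelling m).le_DL hV)
  refine ⟨?_, hDL.trans (pathGraph_graphRadius m).symm⟩
  rw [hDL]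
  split_ifs with h
  · rw [Nat.even_iff] at h
    omega
  · rfl
end

section
/- For all n ≥ 2, DL(Q_n) = n − 1, where Q_n is the n-dimensional hypercube. -/
/-- The `n`-dimensional hypercube: vertices are elements of `(ZMod 2)^n`, adjacent iff
they differ in exactly one coordinate. -/
def hypercube (n : ℕ) : SimpleGraph (Fin n → ZMod 2) where
  Adj v w := hammingDist v w = 1
  symm := by
    constructor
    intro v w h
    rwa [hammingDist_comm]
  loopless := by
    constructor
    intro v h
    simp [hammingDist_self] at h

open Finset Function

section DispersedLabelling

variable {V : Type*} [Fintype V] {G : SimpleGraph V} {k m : ℕ}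

theorem HasDispersedLabelling.mono (h : HasDispersedLabelling G k) (hmk : m ≤ k) :
    HasDispersedLabelling G m :=
  let ⟨φ, hφ⟩ := h
  ⟨φ, fun i j hij => hmk.trans (hφ i j hij)⟩

theorem DL_eq_of_hasDispersedLabelling (h : HasDispersedLabelling G k)
    (h' : ¬ HasDispersedLabelling G (k + 1)) : DL G = k := by
  have hset : {m | HasDispersedLabelling G m} = Set.Iic k := by
    ext m
    refine ⟨fun hm => ?_, h.mono⟩
    by_contra hkm
    exact h' (hm.mono (by simpa using hkm))
  rw [DL, hset, csSup_Iic]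

theorem hasDispersedLabelling_of_list [DecidableEq V] (l : List V) (hnd : l.Nodup)
    (hlen : l.length = Fintype.card V) (hl : l.IsChain fun v w => k ≤ G.dist v w) :
    HasDispersedLabelling G k := by
  have hmem : ∀ v, v ∈ l := by
    have : l.toFinset = univ := eq_univ_of_card _ (by rw [List.toFinset_card_of_nodup hnd, hlen])
    simpa [Finset.ext_iff] using this
  refine ⟨(finCongr hlen.symm).trans (hnd.getEquivOfForallMemList l hmem), fun i j hij => ?_⟩
  simpa [hij] using hl.getElem i (by omega)

theorem not_hasDispersedLabelling_of_subsingleton (hcard : 3 ≤ Fintype.card V)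
    (h : ∀ u v w, k ≤ G.dist u v → k ≤ G.dist u w → v = w) :
    ¬ HasDispersedLabelling G k := by
  rintro ⟨φ, hφ⟩
  have h02 := φ.injective <| h (φ ⟨1, by omega⟩) _ _
    (G.dist_comm ▸ hφ ⟨0, by omega⟩ _ rfl) (hφ _ ⟨2, by omega⟩ rfl)
  simp [Fin.ext_iff] at h02

end DispersedLabelling

section Hamming

variable {ι : Type*} [Fintype ι] {β : ι → Type*} [∀ i, DecidableEq (β i)]

theorem hammingDist_eq_one_iff {x y : ∀ i, β i} :
    hammingDist x y = 1 ↔ ∃ t, ∀ k, x k ≠ y k ↔ k = t := by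
  simp [hammingDist, Finset.card_eq_one, Finset.ext_iff]

theorem hammingDist_eq_card_iff {x y : ∀ i, β i} :
    hammingDist x y = Fintype.card ι ↔ ∀ k, x k ≠ y k := by
  simp [hammingDist, ← card_univ, card_filter_eq_iff]

variable [DecidableEq ι]

theorem hammingDist_update_self {x : ∀ i, β i} {t : ι} {a : β t} (h : x t ≠ a) :
    hammingDist x (update x t a) = 1 :=
  hammingDist_eq_one_iff.2 ⟨t, fun k => by rcases eq_or_ne k t with rfl | hk <;> simp [*]⟩

theorem hammingDist_update_add_one {x y : ∀ i, β i} {t : ι} (h : x t ≠ y t) :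
    hammingDist (update x t (y t)) y + 1 = hammingDist x y := by
  have : ({i | update x t (y t) i ≠ y i} : Finset ι) =
      ({i | x i ≠ y i} : Finset ι).erase t := by
    ext k
    rcases eq_or_ne k t with rfl | hk <;> simp [*]
  rw [hammingDist, hammingDist, this, card_erase_add_one (by simpa using h)]

end Hamming

section Hypercube

variable {n : ℕ}

theorem hypercube_adj {v w : Fin n → ZMod 2} : (hypercube n).Adj v w ↔ hammingDist v w = 1 :=
  Iff.rfl

theorem exists_walk_length_eq_hammingDist (v w : Fin n → ZMod 2) :
    ∃ p : (hypercube n).Walk v w, p.length = hammingDist v w := by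
  induction hd : hammingDist v w generalizing v with
  | zero =>
    obtain rfl := hammingDist_eq_zero.1 hd
    exact ⟨.nil, rfl⟩
  | succ d ih =>
    have hvw : v ≠ w := hammingDist_pos.1 (by omega)
    obtain ⟨t, ht⟩ := Function.ne_iff.1 hvw
    obtain ⟨p, hp⟩ := ih (update v t (w t)) (by have := hammingDist_update_add_one ht; omega)
    exact ⟨.cons (hypercube_adj.2 (hammingDist_update_self ht)) p, by simp [hp]⟩

theorem hammingDist_le_walk_length {v w : Fin n → ZMod 2} (p : (hypercube n).Walk v w) :
    hammingDist v w ≤ p.length := by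
  induction p with
  | nil => simp
  | @cons u x w hadj p ih =>
    have := hammingDist_triangle u x w
    rw [SimpleGraph.Walk.length_cons, ← hypercube_adj.1 hadj]
    omega

theorem dist_hypercube (v w : Fin n → ZMod 2) : (hypercube n).dist v w = hammingDist v w := by
  obtain ⟨p, hp⟩ := exists_walk_length_eq_hammingDist v w
  obtain ⟨q, hq⟩ := SimpleGraph.Reachable.exists_walk_length_eq_dist ⟨p⟩
  exact le_antisymm (hp ▸ SimpleGraph.dist_le p) (hq ▸ hammingDist_le_walk_length q)

end Hypercube

theorem hammingDist_cons_cons {β : Type*} [DecidableEq β] {n : ℕ} (a b : β)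
    (x y : Fin n → β) :
    hammingDist (Fin.cons a x : Fin (n + 1) → β) (Fin.cons b y) =
      (if a = b then 0 else 1) + hammingDist x y := by
  simp [hammingDist, card_filter, Fin.sum_univ_succ]

def grayCode : (n : ℕ) → List (Fin n → ZMod 2)
  | 0 => [0]
  | n + 1 => (grayCode n).map (Fin.cons 0) ++ (grayCode n).reverse.map (Fin.cons 1)

theorem length_grayCode (n : ℕ) : (grayCode n).length = 2 ^ n := by
  induction n with
  | zero => rfl
  | succ n ih => simp [grayCode, ih, pow_succ, mul_two]

theorem nodup_grayCode (n : ℕ) : (grayCode n).Nodup := by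
  induction n with
  | zero => simp [grayCode]
  | succ n ih =>
    refine List.nodup_append.2 ⟨ih.map (Fin.cons_right_injective _),
      (List.nodup_reverse.2 ih).map (Fin.cons_right_injective _), ?_⟩
    simp only [List.mem_map, List.mem_reverse]
    rintro _ ⟨x, -, rfl⟩ _ ⟨y, -, rfl⟩ h
    simpa using congrFun h 0

theorem isChain_grayCode (n : ℕ) : (grayCode n).IsChain (hypercube n).Adj := by
  induction n with
  | zero => simp [grayCode]
  | succ n ih =>
    refine List.isChain_append.2 ⟨?_, ?_, ?_⟩
    · refine List.isChain_map_of_isChain _ (fun x y hxy => ?_) ih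
      simpa [hypercube_adj, hammingDist_cons_cons] using hxy
    · refine List.isChain_map_of_isChain _ (fun x y hxy => ?_)
        (List.isChain_reverse.2 (ih.imp fun _ _ h => h.symm))
      simpa [hypercube_adj, hammingDist_cons_cons] using hxy
    · simp only [List.getLast?_map, List.head?_map, List.head?_reverse, Option.mem_def,
        Option.map_eq_some_iff]
      rintro _ ⟨x, hx, rfl⟩ _ ⟨y, hy, rfl⟩
      obtain rfl : x = y := by simp_all
      simp [hypercube_adj, hammingDist_cons_cons]

section Twist

variable {ι : Type*} [Fintype ι] [DecidableEq ι]

def twist (p : ι) (x : ι → ZMod 2) : ι → ZMod 2 :=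
  fun k => (∑ i, x i) + if k = p then 0 else x k

theorem twist_injective (p : ι) : Injective (twist p) := by
  intro x y h
  have hsum : ∑ i, x i = ∑ i, y i := by simpa [twist] using congrFun h p
  have hne : ∀ k ≠ p, x k = y k := fun k hk => by simpa [twist, hk, hsum] using congrFun h k
  funext k
  rcases eq_or_ne k p with rfl | hk
  · rw [Fintype.sum_eq_add_sum_compl k, Fintype.sum_eq_add_sum_compl k,
      sum_congr rfl fun i hi => hne i (by simpa using hi)] at hsum
    exact add_right_cancel hsum
  · exact hne k hk

theorem card_sub_one_le_hammingDist_twist (p : ι) {x y : ι → ZMod 2}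
    (h : hammingDist x y = 1) : Fintype.card ι - 1 ≤ hammingDist (twist p x) (twist p y) := by
  obtain ⟨t, ht⟩ := hammingDist_eq_one_iff.1 h
  have hagree : ∀ k ≠ t, x k = y k := fun k hk => not_not.1 fun h => hk ((ht k).1 h)
  have hsum : ∑ i, x i ≠ ∑ i, y i := by
    rw [← sub_ne_zero, ← sum_sub_distrib,
      Fintype.sum_eq_single t fun k hk => sub_eq_zero.2 (hagree k hk)]
    exact sub_ne_zero.2 ((ht t).2 rfl)
  have hdiff : ∀ k ≠ t, twist p x k ≠ twist p y k := by
    intro k hk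
    unfold twist
    split_ifs <;> simpa [hagree k hk] using hsum
  calc Fintype.card ι - 1 = #(univ.erase t) := by rw [card_erase_of_mem (mem_univ t), card_univ]
    _ ≤ hammingDist (twist p x) (twist p y) :=
      card_le_card fun k hk => by simpa using hdiff k (ne_of_mem_erase hk)

end Twist

theorem hasDispersedLabelling_hypercube (n : ℕ) [NeZero n] :
    HasDispersedLabelling (hypercube n) (n - 1) := by
  refine hasDispersedLabelling_of_list ((grayCode n).map (twist 0))
    ((nodup_grayCode n).map (twist_injective 0)) (by simp [length_grayCode]) ?_
  refine List.isChain_map_of_isChain _ (fun x y hxy => ?_) (isChain_grayCode n)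
  simpa [dist_hypercube] using card_sub_one_le_hammingDist_twist 0 hxy

theorem not_hasDispersedLabelling_hypercube {n : ℕ} (hn : 2 ≤ n) :
    ¬ HasDispersedLabelling (hypercube n) n := by
  refine not_hasDispersedLabelling_of_subsingleton ?_ fun u v w huv huw => funext fun k => ?_
  · simpa using (show 3 ≤ 2 ^ 2 by norm_num).trans (Nat.pow_le_pow_right two_pos hn)
  · have hv := hammingDist_eq_card_iff.1 (le_antisymm hammingDist_le_card_fintype
      (by simpa [dist_hypercube] using huv)) k
    have hw := hammingDist_eq_card_iff.1 (le_antisymm hammingDist_le_card_fintype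
      (by simpa [dist_hypercube] using huw)) k
    generalize u k = a, v k = b, w k = c at hv hw
    revert a b c
    decide

theorem DL_hypercube (n : ℕ) (hn : 2 ≤ n) :
    DL (hypercube n) = n - 1 := by
  have : NeZero n := ⟨by omega⟩
  refine DL_eq_of_hasDispersedLabelling (hasDispersedLabelling_hypercube n) ?_
  rw [Nat.sub_add_cancel (by omega)]
  exact not_hasDispersedLabelling_hypercube hn
end
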